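/- arXiv:1010.1608 — 5 statements merged into one kernel-verified Lean document; each statement's English description precedes it below -/
import Mathlib

section
/- Let $N \ge 1$ and $p > 1 + 2/N$, and set $\gamma = 1/(p-1)$ and $A = \frac{1}{2}\left(\frac{N}{2} - \frac{1}{p-1}\right)^{1/(p-1)}$. Let $\mu \in \mathbb{R}^N$ and $U(x,t) = A\,(t+1)^{-\gamma} \exp\left(-\|x+\mu\|_2^2/(4(t+1))\right)$. Then $U$ is a supersolution of the nonlinear heat equation: for all $x \in \mathbb{R}^N$ and $t \ge 0$, $\partial_t U(x,t) - \Delta U(x,t) - U(x,t)^p \ge 0$. -/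
section helpers

variable {N : ℕ}

lemma hasF (μ : EuclideanSpace ℝ (Fin N)) (C d : ℝ) (y : EuclideanSpace ℝ (Fin N)) :
    HasFDerivAt (fun z : EuclideanSpace ℝ (Fin N) => C * Real.exp (-‖z + μ‖ ^ 2 / d))
      ((C * Real.exp (-‖y + μ‖ ^ 2 / d) * (-2 / d)) • innerSL ℝ (y + μ)) y := by
  have h1 : HasFDerivAt (fun z : EuclideanSpace ℝ (Fin N) => z + μ)
      (ContinuousLinearMap.id ℝ _) y := (hasFDerivAt_id y).add_const μ
  have h4 := ((h1.norm_sq.neg.mul_const d⁻¹).exp).const_mul C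
  simp only [div_eq_mul_inv]
  refine h4.congr_fderiv ?_
  ext v
  simp [div_eq_mul_inv]
  ring

set_option maxHeartbeats 1000000 in
lemma spaceTerm (μ x : EuclideanSpace ℝ (Fin N)) (C d : ℝ) (i : Fin N) :
    fderiv ℝ (fun y => fderiv ℝ (fun z : EuclideanSpace ℝ (Fin N) =>
        C * Real.exp (-‖z + μ‖ ^ 2 / d)) y (EuclideanSpace.single i 1)) x
      (EuclideanSpace.single i 1)
    = C * Real.exp (-‖x + μ‖ ^ 2 / d) * ((4 / d ^ 2) * (x i + μ i) ^ 2 - 2 / d) := by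
  have hf1 : ∀ y : EuclideanSpace ℝ (Fin N),
      fderiv ℝ (fun z : EuclideanSpace ℝ (Fin N) => C * Real.exp (-‖z + μ‖ ^ 2 / d)) y
        (EuclideanSpace.single i 1)
      = (C * Real.exp (-‖y + μ‖ ^ 2 / d) * (-2 / d)) * (y i + μ i) := by
    intro y
    rw [(hasF μ C d y).fderiv]
    simp [EuclideanSpace.inner_single_right, PiLp.add_apply]
    ring
  have hfun : (fun y => fderiv ℝ (fun z : EuclideanSpace ℝ (Fin N) =>
      C * Real.exp (-‖z + μ‖ ^ 2 / d)) y (EuclideanSpace.single i 1))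
      = fun y : EuclideanSpace ℝ (Fin N) =>
        (C * Real.exp (-‖y + μ‖ ^ 2 / d) * (-2 / d)) * (y i + μ i) := funext hf1
  rw [hfun]
  have hg1 := (hasF μ C d x).mul_const (-2 / d)
  have hg2 : HasFDerivAt (fun y : EuclideanSpace ℝ (Fin N) => y i + μ i)
      (PiLp.proj (𝕜 := ℝ) 2 (fun _ : Fin N => ℝ) i) x := by
    exact (ContinuousLinearMap.hasFDerivAt
      (PiLp.proj (𝕜 := ℝ) 2 (fun _ : Fin N => ℝ) i)).add_const (μ i)
  have hG := hg1.mul hg2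
  rw [show (fun y : EuclideanSpace ℝ (Fin N) => (C * Real.exp (-‖y + μ‖ ^ 2 / d) * (-2 / d)) * (y i + μ i)) = (fun y => C * Real.exp (-‖y + μ‖ ^ 2 / d) * (-2 / d)) * (fun y => y i + μ i) from rfl, hG.fderiv]
  simp [EuclideanSpace.inner_single_right, PiLp.add_apply, EuclideanSpace.single_apply]
  ring

lemma timeDeriv (A γ r t : ℝ) (h : 0 < t + 1) :
    deriv (fun s : ℝ => A * (s + 1) ^ (-γ) * Real.exp (-r / (4 * (s + 1)))) t
    = A * (t + 1) ^ (-γ) * Real.exp (-r / (4 * (t + 1))) *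
        (r / (4 * (t + 1) ^ 2) - γ / (t + 1)) := by
  have h0 : t + 1 ≠ 0 := ne_of_gt h
  have h1 : HasDerivAt (fun s : ℝ => s + 1) 1 t := (hasDerivAt_id t).add_const 1
  have h2 : HasDerivAt (fun s : ℝ => (s + 1) ^ (-γ)) (1 * -γ * (t + 1) ^ (-γ - 1)) t :=
    h1.rpow_const (Or.inl h0)
  have h3 : HasDerivAt (fun s : ℝ => -r / (4 * (s + 1))) (r / (4 * (t + 1) ^ 2)) t := by
    rw [show (fun s : ℝ => -r / (4 * (s + 1))) = (fun s : ℝ => -r / 4 * (s + 1)⁻¹) from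
      by funext s; rw [div_mul_eq_div_div, div_eq_mul_inv]]
    have := (h1.inv h0).const_mul (-r / 4)
    refine this.congr_deriv ?_
    field_simp
  have h5 := (h2.const_mul A).mul h3.exp
  rw [show (fun s : ℝ => A * (s + 1) ^ (-γ) * Real.exp (-r / (4 * (s + 1)))) = (fun y => A * (y + 1) ^ (-γ)) * (fun x => Real.exp (-r / (4 * (x + 1)))) from rfl, h5.deriv]
  rw [show (-γ - 1 : ℝ) = -γ + (-1) from by ring, Real.rpow_add h, Real.rpow_neg_one]
  field_simp
  ring

end helpers

set_option maxHeartbeats 2000000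


/-- With the supercritical choice of constants `γ = 1/(p-1)` and
`A = (1/2) (N/2 - 1/(p-1))^(1/(p-1))`, the barrier function is a supersolution of
the nonlinear heat equation: `∂ₜU - ΔU - U^p ≥ 0` on `ℝ^N × [0,∞)`,
where `Δ` is the sum of second partial derivatives in the space variables. -/
theorem stmt8 (N : ℕ) (hN : 1 ≤ N) (p : ℝ) (hp : 1 + 2 / (N : ℝ) < p)
    (γ A : ℝ) (hγ : γ = 1 / (p - 1))
    (hA : A = (1 / 2) * ((N : ℝ) / 2 - 1 / (p - 1)) ^ (1 / (p - 1)))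
    (μ : EuclideanSpace ℝ (Fin N))
    (U : EuclideanSpace ℝ (Fin N) → ℝ → ℝ)
    (hU : ∀ x t, U x t = A * (t + 1) ^ (-γ) * Real.exp (-‖x + μ‖ ^ 2 / (4 * (t + 1))))
    (x : EuclideanSpace ℝ (Fin N)) (t : ℝ) (ht : 0 ≤ t) :
    0 ≤ deriv (fun s => U x s) t -
        (∑ i : Fin N,
          fderiv ℝ (fun y => fderiv ℝ (fun z => U z t) y (EuclideanSpace.single i 1)) x
            (EuclideanSpace.single i 1)) -
        U x t ^ p := by
  have hNpos : (0:ℝ) < N := by exact_mod_cast Nat.pos_of_ne_zero (by omega)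
  have h2N : (0:ℝ) < 2 / N := by positivity
  have hp1 : 1 < p := by linarith
  have hp2 : 2 / (N:ℝ) < p - 1 := by linarith
  have hpne : p - 1 ≠ 0 := ne_of_gt (by linarith)
  have hγlt : γ < (N:ℝ) / 2 := by
    rw [hγ]
    calc 1 / (p - 1) < 1 / (2 / (N:ℝ)) := by
          apply one_div_lt_one_div_of_lt h2N hp2
      _ = (N:ℝ) / 2 := by rw [one_div_div]
  have hc0 : (0:ℝ) < (N:ℝ) / 2 - 1 / (p - 1) := by rw [← hγ] at *; linarith
  have hτ : (0:ℝ) < t + 1 := by linarith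
  have hA0 : 0 < A := by rw [hA]; positivity
  set r : ℝ := ‖x + μ‖ ^ 2 with hrdef
  have hr0 : 0 ≤ r := by positivity
  set E : ℝ := Real.exp (-r / (4 * (t + 1))) with hEdef
  have hE : 0 < E := Real.exp_pos _
  have hE1 : E ≤ 1 := by
    rw [hEdef]
    exact Real.exp_le_one_iff.mpr
      (div_nonpos_of_nonpos_of_nonneg (by linarith) (by linarith))
  -- time derivative
  have key1 : deriv (fun s => U x s) t
      = A * (t + 1) ^ (-γ) * E * (r / (4 * (t + 1) ^ 2) - γ / (t + 1)) := by
    rw [show (fun s => U x s) = (fun s : ℝ => A * (s + 1) ^ (-γ) *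
        Real.exp (-r / (4 * (s + 1)))) from funext fun s => hU x s]
    exact timeDeriv A γ r t hτ
  -- space derivatives
  have hfun : (fun z => U z t) = (fun z : EuclideanSpace ℝ (Fin N) =>
      (A * (t + 1) ^ (-γ)) * Real.exp (-‖z + μ‖ ^ 2 / (4 * (t + 1)))) :=
    funext fun z => hU z t
  have hsumsq : ∑ i : Fin N, (x i + μ i) ^ 2 = r := by
    rw [hrdef, PiLp.norm_sq_eq_of_L2]
    simp [Real.norm_eq_abs, sq_abs, PiLp.add_apply]
  have key2 : (∑ i : Fin N,
        fderiv ℝ (fun y => fderiv ℝ (fun z => U z t) y (EuclideanSpace.single i 1)) x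
          (EuclideanSpace.single i 1))
      = A * (t + 1) ^ (-γ) * E * (r / (4 * (t + 1) ^ 2) - (N:ℝ) / (2 * (t + 1))) := by
    simp only [hfun]
    rw [Finset.sum_congr rfl fun i _ => spaceTerm μ x (A * (t + 1) ^ (-γ)) (4 * (t + 1)) i]
    simp only [mul_sub, Finset.sum_sub_distrib, ← Finset.mul_sum, Finset.sum_const,
      Finset.card_univ, Fintype.card_fin, nsmul_eq_mul, hsumsq]
    rw [← hEdef]
    field_simp
    ring
  -- bound on U^p
  have hUval : U x t = A * (t + 1) ^ (-γ) * E := hU x t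
  have hτγ : 0 < (t + 1 : ℝ) ^ (-γ) := Real.rpow_pos_of_pos hτ _
  have hγp : -γ * p = -γ + (-1) := by
    have h : γ * (p - 1) = 1 := by rw [hγ]; field_simp
    nlinarith [h]
  have hApm : A ^ (p - 1) ≤ (N:ℝ) / 2 - γ := by
    rw [hA, Real.mul_rpow (by norm_num) (Real.rpow_pos_of_pos hc0 _).le,
      ← Real.rpow_mul hc0.le, one_div_mul_cancel hpne, Real.rpow_one, ← hγ]
    have h12 : (1/2 : ℝ) ^ (p - 1) ≤ 1 :=
      Real.rpow_le_one (by norm_num) (by norm_num) (by linarith)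
    nlinarith [hγlt]
  have hEp : E ^ p ≤ E := by
    calc E ^ p ≤ E ^ (1:ℝ) := Real.rpow_le_rpow_of_exponent_ge hE hE1 hp1.le
      _ = E := Real.rpow_one E
  have hUp : U x t ^ p ≤ A * (t + 1) ^ (-γ) * E * (((N:ℝ) / 2 - γ) / (t + 1)) := by
    rw [hUval]
    have h1 : (A * (t + 1) ^ (-γ) * E) ^ p = A ^ p * ((t + 1) ^ (-γ)) ^ p * E ^ p := by
      rw [Real.mul_rpow (by positivity) hE.le, Real.mul_rpow hA0.le hτγ.le]
    rw [h1]
    have h2 : ((t + 1 : ℝ) ^ (-γ)) ^ p = (t + 1) ^ (-γ) * (t + 1)⁻¹ := by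
      rw [← Real.rpow_mul hτ.le, hγp, Real.rpow_add hτ, Real.rpow_neg_one]
    have h3 : A ^ p = A * A ^ (p - 1) := by
      nth_rewrite 2 [← Real.rpow_one A]
      rw [← Real.rpow_add hA0]
      ring_nf
    calc A ^ p * ((t + 1) ^ (-γ)) ^ p * E ^ p
        ≤ (A * ((N:ℝ) / 2 - γ)) * ((t + 1) ^ (-γ) * (t + 1)⁻¹) * E := by
          rw [h2, h3]
          have hc : (0:ℝ) < (N:ℝ) / 2 - γ := by linarith
          gcongr
      _ = A * (t + 1) ^ (-γ) * E * (((N:ℝ) / 2 - γ) / (t + 1)) := by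
          field_simp
  rw [key1, key2]
  have hid : A * (t + 1) ^ (-γ) * E * (r / (4 * (t + 1) ^ 2) - γ / (t + 1)) -
      A * (t + 1) ^ (-γ) * E * (r / (4 * (t + 1) ^ 2) - (N:ℝ) / (2 * (t + 1)))
      = A * (t + 1) ^ (-γ) * E * (((N:ℝ) / 2 - γ) / (t + 1)) := by
    field_simp
    ring
  linarith [hUp, hid.ge, hid.le]
end

section
/- Let $N \ge 1$ and $p > 1 + 2/N$, set $\gamma = 1/(p-1)$ and $A = \frac{1}{2}\left(\frac{N}{2} - \frac{1}{p-1}\right)^{1/(p-1)}$, let $\mu \in \mathbb{R}^N$, and define $U(x,t) = A\,(t+1)^{-\gamma} \exp\left(-\|x+\mu\|_2^2/(4(t+1))\right)$. Let $\varsigma \ge 0$, let $\sigma$ be a real number with $0 \le \sigma \le \varsigma$, and let $x, v \in \mathbb{R}^N$ satisfy $(x+\mu)\cdot v \le -\varsigma N$. Then for all $t \ge 0$, $\sigma\, \partial_t U(x,t) + D_v U(x,t) \ge 0$, where $D_v U(x,t)$ is the directional derivative of $U(\cdot,t)$ at $x$ in the direction $v$. -/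
set_option maxHeartbeats 1000000 in
open RealInnerProductSpace in
/-- The key dissipative boundary inequality: with the supercritical constants
`γ = 1/(p-1)`, `A = (1/2)(N/2 - 1/(p-1))^(1/(p-1))`, if `0 ≤ σ ≤ ς` and
`(x+μ)·v ≤ -ςN`, then `σ ∂ₜU(x,t) + D_v U(x,t) ≥ 0` for all `t ≥ 0`. -/
theorem stmt11 (N : ℕ) (hN : 1 ≤ N) (p : ℝ) (hp : 1 + 2 / (N : ℝ) < p)
    (γ A : ℝ) (hγ : γ = 1 / (p - 1))
    (hA : A = (1 / 2) * ((N : ℝ) / 2 - 1 / (p - 1)) ^ (1 / (p - 1)))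
    (μ : EuclideanSpace ℝ (Fin N))
    (U : EuclideanSpace ℝ (Fin N) → ℝ → ℝ)
    (hU : ∀ x t, U x t = A * (t + 1) ^ (-γ) * Real.exp (-‖x + μ‖ ^ 2 / (4 * (t + 1))))
    (ς : ℝ) (hς : 0 ≤ ς) (σ : ℝ) (hσ0 : 0 ≤ σ) (hσς : σ ≤ ς)
    (x v : EuclideanSpace ℝ (Fin N)) (hxv : ⟪x + μ, v⟫ ≤ -(ς * N))
    (t : ℝ) (ht : 0 ≤ t) :
    0 ≤ σ * deriv (fun s => U x s) t + fderiv ℝ (fun z => U z t) x v := by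
  have hτ : (0:ℝ) < t + 1 := by linarith
  have hN1 : (1:ℝ) ≤ (N:ℝ) := by exact_mod_cast hN
  have hN0 : (0:ℝ) < (N:ℝ) := by linarith
  have hp1 : (0:ℝ) < p - 1 := by
    have : (0:ℝ) < 2 / (N:ℝ) := by positivity
    linarith
  have hγlt : γ < (N:ℝ) / 2 := by
    rw [hγ, div_lt_iff₀ hp1]
    have h2N : 2 / (N:ℝ) < p - 1 := by linarith
    have : (2:ℝ) < (p - 1) * N := (div_lt_iff₀ hN0).mp h2N
    nlinarith
  have hγ0 : 0 < γ := by rw [hγ]; positivity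
  have hA0 : 0 < A := by
    rw [hA]
    have : (0:ℝ) < (N:ℝ)/2 - 1/(p-1) := by rw [hγ] at hγlt; linarith
    positivity
  set c : ℝ := ‖x + μ‖ ^ 2 with hc
  have hc0 : 0 ≤ c := sq_nonneg _
  set ip : ℝ := ⟪x + μ, v⟫ with hip
  set P : ℝ := (t + 1) ^ (-γ) with hP
  have hP0 : 0 < P := Real.rpow_pos_of_pos hτ _
  set E : ℝ := Real.exp (-c / (4 * (t + 1))) with hE
  have hE0 : 0 < E := Real.exp_pos _
  -- time derivative
  have h1 : HasDerivAt (fun s : ℝ => (s + 1) ^ (-γ)) (1 * (-γ) * (t + 1) ^ (-γ - 1)) t :=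
    ((hasDerivAt_id t).add_const 1).rpow_const (Or.inl hτ.ne')
  have hden : HasDerivAt (fun s : ℝ => 4 * (s + 1)) 4 t := by
    simpa using ((hasDerivAt_id t).add_const 1).const_mul (4:ℝ)
  have h2 : HasDerivAt (fun s : ℝ => -c / (4 * (s + 1)))
      ((0 * (4 * (t + 1)) - -c * 4) / (4 * (t + 1)) ^ 2) t :=
    (hasDerivAt_const t (-c)).div hden (by positivity)
  have h3 := h2.exp
  have hT := ((h1.const_mul A).mul h3)
  have hfun : (fun s => U x s) = fun s : ℝ =>
      A * (s + 1) ^ (-γ) * Real.exp (-c / (4 * (s + 1))) := funext fun s => hU x s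
  have hTd : deriv (fun s => U x s) t
      = A * (1 * (-γ) * (t + 1) ^ (-γ - 1)) * E
        + A * P * (E * ((0 * (4 * (t + 1)) - -c * 4) / (4 * (t + 1)) ^ 2)) := by
    rw [hfun]
    exact hT.deriv
  -- spatial derivative
  have hg : HasFDerivAt (fun z : EuclideanSpace ℝ (Fin N) => ‖z + μ‖ ^ 2)
      (2 • ((innerSL ℝ (x + μ)).comp (ContinuousLinearMap.id ℝ _))) x :=
    ((hasFDerivAt_id x).add_const μ).norm_sq
  have hφ : HasDerivAt (fun r : ℝ => A * P * Real.exp (-r / (4 * (t + 1))))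
      (A * P * (Real.exp (-c / (4 * (t + 1))) * (-1 / (4 * (t + 1))))) c := by
    have := (((hasDerivAt_id c).neg.div_const (4 * (t + 1))).exp).const_mul (A * P)
    simpa [neg_div] using this
  have hS := hφ.comp_hasFDerivAt x hg
  have hfun2 : (fun z => U z t) = fun z : EuclideanSpace ℝ (Fin N) =>
      A * P * Real.exp (-‖z + μ‖ ^ 2 / (4 * (t + 1))) := by
    funext z
    rw [hU]
  have hSd : fderiv ℝ (fun z => U z t) x v
      = A * P * (E * (-1 / (4 * (t + 1)))) * (2 * ip) := by
    rw [hfun2]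
    have hfd : fderiv ℝ (fun z : EuclideanSpace ℝ (Fin N) =>
        A * P * Real.exp (-‖z + μ‖ ^ 2 / (4 * (t + 1)))) x
        = (A * P * (Real.exp (-c / (4 * (t + 1))) * (-1 / (4 * (t + 1))))) •
          (2 • ((innerSL ℝ (x + μ)).comp (ContinuousLinearMap.id ℝ _))) := by
      have := hS.fderiv
      exact this
    rw [hfd]
    simp only [ContinuousLinearMap.smul_apply, ContinuousLinearMap.comp_apply,
      ContinuousLinearMap.id_apply, innerSL_apply_apply, smul_eq_mul, nsmul_eq_mul,
      Nat.cast_ofNat] <;> (rw [← hip, ← hE])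
  clear_value c ip P E
  clear hT h1 h2 h3 hden hg hφ hS hfun hfun2 hU
  rw [hTd, hSd]
  -- rewrite (t+1)^(-γ-1) = P * (t+1)⁻¹
  have hpow : (t + 1) ^ (-γ - 1) = P * (t + 1)⁻¹ := by
    rw [hP, sub_eq_add_neg, Real.rpow_add hτ, Real.rpow_neg_one]
  rw [hpow]
  -- key algebraic inequality
  have hipN : ip ≤ -(σ * N) := le_trans hxv
    (neg_le_neg (mul_le_mul_of_nonneg_right hσς hN0.le))
  have h1' : σ * γ ≤ σ * ((N:ℝ) / 2) := mul_le_mul_of_nonneg_left hγlt.le hσ0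
  have hcoef : 0 ≤ -(4 * σ * γ) - 2 * ip := by linarith
  have key : 0 ≤ σ * c - 4 * σ * γ * (t + 1) - 2 * ip * (t + 1) := by
    have hprod : 0 ≤ (-(4 * σ * γ) - 2 * ip) * (t + 1) := mul_nonneg hcoef hτ.le
    have hsc : 0 ≤ σ * c := mul_nonneg hσ0 hc0
    nlinarith [hprod, hsc]
  have hfac : (0:ℝ) < A * P * E / (4 * (t + 1) ^ 2) := by positivity
  have hrw : σ * (A * (1 * -γ * (P * (t + 1)⁻¹)) * E
        + A * P * (E * ((0 * (4 * (t + 1)) - -c * 4) / (4 * (t + 1)) ^ 2)))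
      + A * P * (E * (-1 / (4 * (t + 1)))) * (2 * ip)
      = (A * P * E / (4 * (t + 1) ^ 2)) * (σ * c - 4 * σ * γ * (t + 1) - 2 * ip * (t + 1)) := by
    field_simp
    ring
  rw [hrw]
  exact mul_nonneg hfac.le key
end

section
/- Let $p > 3$, set $\gamma = 1/(p-1)$ and $A = \frac{1}{2}\left(\frac{1}{2} - \frac{1}{p-1}\right)^{1/(p-1)}$. Let $a, \mu_1 \in \mathbb{R}$ and $\varsigma \ge 0$ satisfy $-(a+\mu_1) - \varsigma \ge 0$, and define $V_1(x,t) = A\,(t+1)^{-\gamma} \exp\left(-(x+\mu_1)^2/(4(t+1))\right)$ for $x \in \mathbb{R}$, $t \ge 0$. Then for every real $\sigma$ with $0 \le \sigma \le \varsigma$ and every $t \ge 0$, $\sigma\, \partial_t V_1(a,t) + \partial_x V_1(a,t) \ge 0$. -/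
/-- One-dimensional dissipative boundary inequality at the left boundary point `a`
(where the outer normal is `+1`): if `p > 3`, `γ = 1/(p-1)`,
`A = (1/2)(1/2 - 1/(p-1))^(1/(p-1))`, `-(a+μ₁) - ς ≥ 0` and `0 ≤ σ ≤ ς`, then
`σ ∂ₜV₁(a,t) + ∂ₓV₁(a,t) ≥ 0` for all `t ≥ 0`. -/
theorem stmt17 (p : ℝ) (hp : 3 < p)
    (γ A : ℝ) (hγ : γ = 1 / (p - 1))
    (hA : A = (1 / 2) * ((1 : ℝ) / 2 - 1 / (p - 1)) ^ (1 / (p - 1)))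
    (a μ₁ ς : ℝ) (hς : 0 ≤ ς) (h : 0 ≤ -(a + μ₁) - ς)
    (V₁ : ℝ → ℝ → ℝ)
    (hV : ∀ x t, V₁ x t = A * (t + 1) ^ (-γ) * Real.exp (-(x + μ₁) ^ 2 / (4 * (t + 1))))
    (σ : ℝ) (hσ0 : 0 ≤ σ) (hσς : σ ≤ ς) (t : ℝ) (ht : 0 ≤ t) :
    0 ≤ σ * deriv (fun s => V₁ a s) t + deriv (fun x => V₁ x t) a := by
  have hp1 : (0:ℝ) < p - 1 := by linarith
  have hγpos : 0 < γ := by rw [hγ]; positivity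
  have hγlt : γ ≤ 1/2 := by
    rw [hγ, div_le_div_iff₀ hp1 two_pos]; linarith
  have hApos : 0 < A := by
    have h0 : (0:ℝ) < 1/2 - 1/(p-1) := by
      have : 1/(p-1) < 1/2 := by rw [div_lt_div_iff₀ hp1 two_pos]; linarith
      linarith
    rw [hA]; exact mul_pos (by norm_num) (Real.rpow_pos_of_pos h0 _)
  have hT : (0:ℝ) < t + 1 := by linarith
  set c : ℝ := (a + μ₁)^2 with hc
  set r : ℝ := -(a + μ₁) with hr
  have hrς : ς ≤ r := by simp only [hr]; linarith
  -- time derivative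
  have hpow : HasDerivAt (fun s : ℝ => (s+1) ^ (-γ)) (-γ * (t+1)^(-γ-1)) t := by
    have h0 : HasDerivAt (fun s : ℝ => s + 1) 1 t := (hasDerivAt_id t).add_const 1
    have := (Real.hasDerivAt_rpow_const (x := t+1) (p := -γ) (Or.inl hT.ne')).comp t h0
    exact this.congr_deriv (by ring)
  have hu : HasDerivAt (fun s : ℝ => -(a+μ₁)^2/(4*(s+1))) (c/(4*(t+1)^2)) t := by
    have h0 : HasDerivAt (fun s : ℝ => s + 1) 1 t := (hasDerivAt_id t).add_const 1
    have h1 := (h0.inv hT.ne').const_mul (-(a+μ₁)^2/4)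
    have heq : (fun s : ℝ => -(a+μ₁)^2/(4*(s+1))) = fun s : ℝ => -(a+μ₁)^2/4 * (s+1)⁻¹ := by
      funext s; simp [div_eq_mul_inv, mul_inv]; ring
    rw [heq]
    refine h1.congr_deriv ?_
    rw [hc]; field_simp
  have hft : HasDerivAt (fun s => V₁ a s)
      (A * ((-γ * (t+1)^(-γ-1)) * Real.exp (-(a+μ₁)^2/(4*(t+1)))
        + (t+1)^(-γ) * (Real.exp (-(a+μ₁)^2/(4*(t+1))) * (c/(4*(t+1)^2))))) t := by
    have heq : (fun s => V₁ a s)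
        = fun s : ℝ => A * ((s+1) ^ (-γ) * Real.exp (-(a+μ₁)^2/(4*(s+1)))) := by
      funext s; rw [hV]; ring
    rw [heq]
    exact (hpow.mul hu.exp).const_mul A
  -- space derivative
  have hv : HasDerivAt (fun x : ℝ => -(x+μ₁)^2/(4*(t+1))) (r/(2*(t+1))) a := by
    have h0 : HasDerivAt (fun x : ℝ => x + μ₁) 1 a := (hasDerivAt_id a).add_const μ₁
    have h1 := (h0.pow 2).const_mul (-1/(4*(t+1)))
    have heq : (fun x : ℝ => -(x+μ₁)^2/(4*(t+1))) = fun x : ℝ => -1/(4*(t+1)) * (x+μ₁)^2 := by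
      funext x; field_simp
    rw [heq]
    refine h1.congr_deriv ?_
    rw [hr]; field_simp; ring
  have hfx : HasDerivAt (fun x => V₁ x t)
      (A * (t+1)^(-γ) * (Real.exp (-(a+μ₁)^2/(4*(t+1))) * (r/(2*(t+1))))) a := by
    have heq : (fun x => V₁ x t)
        = fun x : ℝ => (A * (t+1) ^ (-γ)) * Real.exp (-(x+μ₁)^2/(4*(t+1))) := by
      funext x; rw [hV]
    rw [heq]
    exact hv.exp.const_mul _
  rw [hft.deriv, hfx.deriv]
  set E : ℝ := Real.exp (-(a+μ₁)^2/(4*(t+1))) with hE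
  have hEpos : 0 < E := Real.exp_pos _
  set P : ℝ := (t+1) ^ (-γ) with hP
  have hPpos : 0 < P := Real.rpow_pos_of_pos hT _
  have hsplit : (t+1)^(-γ-1) = P / (t+1) := by
    rw [hP, show -γ-1 = -γ - 1 from rfl, Real.rpow_sub hT, Real.rpow_one]
  rw [hsplit]
  have hkey : 0 ≤ σ * (-γ / (t+1) + c/(4*(t+1)^2)) + r/(2*(t+1)) := by
    have h1 : 0 ≤ σ * (c/(4*(t+1)^2)) := by positivity
    have h2 : σ * γ ≤ r / 2 := by nlinarith
    have h3 : σ * (-γ / (t+1)) + r/(2*(t+1)) = (r/2 - σ*γ) / (t+1) := by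
      field_simp; ring
    nlinarith [div_nonneg (by linarith : (0:ℝ) ≤ r/2 - σ*γ) hT.le]
  have hfact : σ * (A * ((-γ * (P/(t+1))) * E + P * (E * (c/(4*(t+1)^2)))))
      + A * P * (E * (r/(2*(t+1))))
      = A * P * E * (σ * (-γ / (t+1) + c/(4*(t+1)^2)) + r/(2*(t+1))) := by
    field_simp
  rw [hfact]
  positivity
end

section
/- Let $p > 3$, set $\gamma = 1/(p-1)$ and $A = \frac{1}{2}\left(\frac{1}{2} - \frac{1}{p-1}\right)^{1/(p-1)}$. Let $b, \mu_2 \in \mathbb{R}$ and $\varsigma \ge 0$ satisfy $(b+\mu_2) - \varsigma \ge 0$, and define $V_2(x,t) = A\,(t+1)^{-\gamma} \exp\left(-(x+\mu_2)^2/(4(t+1))\right)$ for $x \in \mathbb{R}$, $t \ge 0$. Then for every real $\sigma$ with $0 \le \sigma \le \varsigma$ and every $t \ge 0$, $\sigma\, \partial_t V_2(b,t) - \partial_x V_2(b,t) \ge 0$. -/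
/-- One-dimensional dissipative boundary inequality at the right boundary point `b`
(where the outer normal is `-1`): if `p > 3`, `γ = 1/(p-1)`,
`A = (1/2)(1/2 - 1/(p-1))^(1/(p-1))`, `(b+μ₂) - ς ≥ 0` and `0 ≤ σ ≤ ς`, then
`σ ∂ₜV₂(b,t) - ∂ₓV₂(b,t) ≥ 0` for all `t ≥ 0`. -/
theorem stmt18 (p : ℝ) (hp : 3 < p)
    (γ A : ℝ) (hγ : γ = 1 / (p - 1))
    (hA : A = (1 / 2) * ((1 : ℝ) / 2 - 1 / (p - 1)) ^ (1 / (p - 1)))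
    (b μ₂ ς : ℝ) (hς : 0 ≤ ς) (h : 0 ≤ (b + μ₂) - ς)
    (V₂ : ℝ → ℝ → ℝ)
    (hV : ∀ x t, V₂ x t = A * (t + 1) ^ (-γ) * Real.exp (-(x + μ₂) ^ 2 / (4 * (t + 1))))
    (σ : ℝ) (hσ0 : 0 ≤ σ) (hσς : σ ≤ ς) (t : ℝ) (ht : 0 ≤ t) :
    0 ≤ σ * deriv (fun s => V₂ b s) t - deriv (fun x => V₂ x t) b := by
  have hτ : (0:ℝ) < t + 1 := by linarith
  have hτ' : t + 1 ≠ 0 := ne_of_gt hτ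
  set m : ℝ := b + μ₂ with hm
  -- x-derivative
  have hgx : (fun x => V₂ x t)
      = fun x => (A * (t + 1) ^ (-γ)) * Real.exp (-(x + μ₂) ^ 2 / (4 * (t + 1))) := by
    funext x; rw [hV x t]
  have hin : HasDerivAt (fun x : ℝ => -(x + μ₂) ^ 2 / (4 * (t + 1)))
      (-(2 * m) / (4 * (t + 1))) b := by
    have h1 : HasDerivAt (fun x : ℝ => x + μ₂) 1 b := (hasDerivAt_id b).add_const μ₂
    have h2 := ((h1.pow 2).neg).div_const (4 * (t + 1))
    refine h2.congr_deriv ?_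
    push_cast
    ring
  have hdx : HasDerivAt (fun x => V₂ x t)
      ((A * (t + 1) ^ (-γ)) * (Real.exp (-m ^ 2 / (4 * (t + 1))) * (-(2 * m) / (4 * (t + 1))))) b := by
    rw [hgx]
    exact (hin.exp).const_mul _
  -- t-derivative
  have hgt : (fun s => V₂ b s)
      = fun s => A * ((s + 1) ^ (-γ) * Real.exp (-m ^ 2 / (4 * (s + 1)))) := by
    funext s; rw [hV b s]; ring
  have hs1 : HasDerivAt (fun s : ℝ => s + 1) 1 t := (hasDerivAt_id t).add_const 1
  have hpow : HasDerivAt (fun s : ℝ => (s + 1) ^ (-γ)) (-γ * (t + 1) ^ (-γ - 1) * 1) t := by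
    have := hs1.rpow_const (p := -γ) (Or.inl hτ')
    convert this using 1; ring
  have hEin : HasDerivAt (fun s : ℝ => -m ^ 2 / (4 * (s + 1)))
      (m ^ 2 / (4 * (t + 1) ^ 2)) t := by
    have hd : HasDerivAt (fun s : ℝ => (s + 1)⁻¹) (-(1 / (t + 1) ^ 2)) t := by
      have := hs1.inv hτ'
      refine this.congr_deriv ?_; ring
    have h2 := hd.const_mul (-m ^ 2 / 4)
    have heq : (fun s : ℝ => -m ^ 2 / 4 * (s + 1)⁻¹) = fun s : ℝ => -m ^ 2 / (4 * (s + 1)) := by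
      funext s; field_simp
    rw [heq] at h2
    refine h2.congr_deriv ?_
    field_simp
  have hdt : HasDerivAt (fun s => V₂ b s)
      (A * ((-γ * (t + 1) ^ (-γ - 1) * 1) * Real.exp (-m ^ 2 / (4 * (t + 1)))
        + (t + 1) ^ (-γ) * (Real.exp (-m ^ 2 / (4 * (t + 1))) * (m ^ 2 / (4 * (t + 1) ^ 2))))) t := by
    rw [hgt]
    exact (hpow.mul hEin.exp).const_mul _
  rw [hdx.deriv, hdt.deriv]
  -- positivity
  have hA0 : 0 ≤ A := by
    rw [hA]
    have h0 : (0:ℝ) ≤ (1 : ℝ) / 2 - 1 / (p - 1) := by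
      have : (1:ℝ) / (p - 1) ≤ 1 / 2 := by
        apply div_le_div_of_nonneg_left <;> linarith
      linarith
    have := Real.rpow_nonneg h0 (1 / (p - 1))
    linarith
  have hγ2 : γ ≤ 1 / 2 := by
    rw [hγ]
    apply div_le_div_of_nonneg_left <;> linarith
  have hγ0 : 0 < γ := by rw [hγ]; exact div_pos one_pos (by linarith)
  have hσm : σ ≤ m := by simp only [hm]; linarith
  have hE0 : 0 < Real.exp (-m ^ 2 / (4 * (t + 1))) := Real.exp_pos _
  have hP0 : 0 < (t + 1) ^ (-γ) := Real.rpow_pos_of_pos hτ _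
  have hP1 : (t + 1) ^ (-γ - 1) = (t + 1) ^ (-γ) / (t + 1) := by
    rw [show -γ - 1 = -γ - (1:ℝ) by ring, Real.rpow_sub hτ, Real.rpow_one]
  rw [hP1]
  set P := (t + 1) ^ (-γ) with hP
  set E := Real.exp (-m ^ 2 / (4 * (t + 1))) with hEdef
  have key : 0 ≤ σ * (-γ + m ^ 2 / (4 * (t + 1)) ) + m / 2 := by
    have h1 : 0 ≤ σ * (m ^ 2 / (4 * (t + 1))) := by positivity
    nlinarith
  have expand : σ * (A * (-γ * (P / (t + 1)) * 1 * E + P * (E * (m ^ 2 / (4 * (t + 1) ^ 2)))))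
      - A * P * (E * (-(2 * m) / (4 * (t + 1))))
      = A * P * E / (t + 1) * (σ * (-γ + m ^ 2 / (4 * (t + 1))) + m / 2) := by
    field_simp
    ring
  rw [expand]
  have : 0 ≤ A * P * E / (t + 1) := by positivity
  exact mul_nonneg this key
end

section
/- Let $p > 3$, set $\gamma = 1/(p-1)$ and $A = \frac{1}{2}\left(\frac{1}{2} - \frac{1}{p-1}\right)^{1/(p-1)}$, let $\mu_0 \in \mathbb{R}$, and define $V_0(x,t) = A\,(t+1)^{-\gamma} \exp\left(-(x+\mu_0)^2/(4(t+1))\right)$ for $x \in \mathbb{R}$, $t \ge 0$. Then $V_0$ is a supersolution of the one-dimensional nonlinear heat equation: for all $x \in \mathbb{R}$ and $t \ge 0$, $\partial_t V_0(x,t) - \partial_{xx} V_0(x,t) - V_0(x,t)^p \ge 0$. -/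
set_option maxHeartbeats 1000000 in
/-- The one-dimensional barrier function is a supersolution of the nonlinear heat
equation: if `p > 3`, `γ = 1/(p-1)` and `A = (1/2)(1/2 - 1/(p-1))^(1/(p-1))`, then
`∂ₜV₀(x,t) - ∂ₓₓV₀(x,t) - V₀(x,t)^p ≥ 0` for all `x ∈ ℝ` and `t ≥ 0`. -/
theorem stmt19 (p : ℝ) (hp : 3 < p)
    (γ A : ℝ) (hγ : γ = 1 / (p - 1))
    (hA : A = (1 / 2) * ((1 : ℝ) / 2 - 1 / (p - 1)) ^ (1 / (p - 1)))
    (μ₀ : ℝ)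
    (V₀ : ℝ → ℝ → ℝ)
    (hV : ∀ x t, V₀ x t = A * (t + 1) ^ (-γ) * Real.exp (-(x + μ₀) ^ 2 / (4 * (t + 1))))
    (x t : ℝ) (ht : 0 ≤ t) :
    0 ≤ deriv (fun s => V₀ x s) t -
        deriv (fun y => deriv (fun z => V₀ z t) y) x -
        V₀ x t ^ p := by
  have hp1 : (0:ℝ) < p - 1 := by linarith
  have hγpos : 0 < γ := by rw [hγ]; positivity
  have hγlt : γ < 1/2 := by
    rw [hγ, div_lt_div_iff₀ hp1 (by norm_num : (0:ℝ) < 2)]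
    linarith
  have hB : (0:ℝ) < 1/2 - 1/(p-1) := by
    have := hγlt; rw [hγ] at this; linarith
  have hApos : 0 < A := by rw [hA]; positivity
  have hu : (0:ℝ) < t + 1 := by linarith
  have hune : (t+1 : ℝ) ≠ 0 := ne_of_gt hu
  set c := x + μ₀ with hc
  set E := Real.exp (-c ^ 2 / (4 * (t + 1))) with hE
  have hEpos : 0 < E := Real.exp_pos _
  -- key rpow identity
  have hupow : (t+1) ^ (-γ - 1) = (t+1) ^ (-γ) / (t+1) := by
    rw [show -γ - 1 = -γ + (-1) by ring, Real.rpow_add hu, Real.rpow_neg_one]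
    ring
  have hupos : (0:ℝ) < (t+1) ^ (-γ) := Real.rpow_pos_of_pos hu _
  -- time derivative
  have hdt : deriv (fun s => V₀ x s) t =
      A * (1 * (-γ) * (t+1) ^ (-γ - 1)) * E +
      (A * (t+1) ^ (-γ)) * (E * ((0 * (4*(t+1)) - (-c^2) * 4) / (4*(t+1))^2)) := by
    have hfun : (fun s => V₀ x s) =
        fun s => A * (s+1) ^ (-γ) * Real.exp (-c ^ 2 / (4 * (s + 1))) := by
      funext s; rw [hV]
    rw [hfun]
    have hg : HasDerivAt (fun s : ℝ => A * (s+1) ^ (-γ))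
        (A * (1 * (-γ) * (t+1) ^ (-γ - 1))) t := by
      exact (((hasDerivAt_id t).add_const 1).rpow_const (Or.inl hune)).const_mul A
    have hden : HasDerivAt (fun s : ℝ => 4 * (s + 1)) 4 t := by
      simpa using ((hasDerivAt_id t).add_const 1).const_mul 4
    have hinner : HasDerivAt (fun s : ℝ => -c^2 / (4*(s+1)))
        ((0 * (4*(t+1)) - (-c^2) * 4) / (4*(t+1))^2) t :=
      (hasDerivAt_const t (-c^2)).div hden (by positivity)
    have hexp : HasDerivAt (fun s : ℝ => Real.exp (-c^2 / (4*(s+1))))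
        (E * ((0 * (4*(t+1)) - (-c^2) * 4) / (4*(t+1))^2)) t := by
      simpa [hE] using hinner.exp
    have := hg.mul hexp
    simp only [hE] at this ⊢
    exact this.deriv
  -- first space derivative as a function
  have hdx : ∀ y : ℝ, deriv (fun z => V₀ z t) y =
      A * (t+1) ^ (-γ) * (Real.exp (-(y + μ₀) ^ 2 / (4 * (t + 1))) * (-(y + μ₀) / (2 * (t+1)))) := by
    intro y
    have hfun : (fun z => V₀ z t) =
        fun z => A * (t+1) ^ (-γ) * Real.exp (-(z + μ₀) ^ 2 / (4 * (t + 1))) := by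
      funext z; rw [hV]
    rw [hfun]
    have hinner : HasDerivAt (fun z : ℝ => -(z + μ₀) ^ 2 / (4 * (t+1)))
        (-((2:ℕ) * (y + μ₀) ^ (2-1) * 1) / (4 * (t+1))) y :=
      (((hasDerivAt_id y).add_const μ₀).pow 2).neg.div_const _
    have hexp := hinner.exp
    have := (hexp.const_mul (A * (t+1) ^ (-γ))).deriv
    rw [this]
    have h4 : (4:ℝ) * (t+1) ≠ 0 := by positivity
    have h2 : (2:ℝ) * (t+1) ≠ 0 := by positivity
    field_simp
    ring
  -- second space derivative
  have hdxx : deriv (fun y => deriv (fun z => V₀ z t) y) x =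
      A * (t+1) ^ (-γ) *
        ((E * (-((2:ℕ) * c ^ (2-1) * 1) / (4 * (t+1)))) * (-c / (2 * (t+1))) +
          E * (-1 / (2 * (t+1)))) := by
    have hfun : (fun y => deriv (fun z => V₀ z t) y) =
        fun y => A * (t+1) ^ (-γ) *
          (Real.exp (-(y + μ₀) ^ 2 / (4 * (t + 1))) * (-(y + μ₀) / (2 * (t+1)))) := by
      funext y; exact hdx y
    rw [hfun]
    have hinner : HasDerivAt (fun y : ℝ => -(y + μ₀) ^ 2 / (4 * (t+1)))
        (-((2:ℕ) * (x + μ₀) ^ (2-1) * 1) / (4 * (t+1))) x :=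
      (((hasDerivAt_id x).add_const μ₀).pow 2).neg.div_const _
    have hexp : HasDerivAt (fun y : ℝ => Real.exp (-(y + μ₀) ^ 2 / (4 * (t+1))))
        (E * (-((2:ℕ) * c ^ (2-1) * 1) / (4 * (t+1)))) x := by
      simpa [hE, hc] using hinner.exp
    have hlin : HasDerivAt (fun y : ℝ => -(y + μ₀) / (2 * (t+1))) (-1 / (2 * (t+1))) x := by
      have := (((hasDerivAt_id x).add_const μ₀).neg).div_const (2 * (t+1))
      simpa using this
    have := ((hexp.mul hlin).const_mul (A * (t+1) ^ (-γ))).deriv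
    simp only [Pi.mul_apply] at this
    rw [this]
  -- combine the two derivatives
  have hcomb : deriv (fun s => V₀ x s) t - deriv (fun y => deriv (fun z => V₀ z t) y) x =
      A * (t+1) ^ (-γ) * E * ((1/2 - γ) / (t+1)) := by
    rw [hdt, hdxx, hupow]
    field_simp
    ring
  -- value of V₀^p
  have hVxt : V₀ x t = A * (t+1) ^ (-γ) * E := by rw [hV, hE, hc]
  have hq : -c ^ 2 / (4 * (t + 1)) ≤ 0 := by
    apply div_nonpos_of_nonpos_of_nonneg
    · nlinarith [sq_nonneg c]
    · positivity
  have hEp : E ^ p = Real.exp (-c ^ 2 / (4 * (t + 1)) * p) := by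
    rw [hE, Real.rpow_def_of_pos (Real.exp_pos _), Real.log_exp]
  have hEle : E ^ p ≤ E := by
    rw [hEp, hE]
    apply Real.exp_le_exp.2
    have h := mul_nonneg (neg_nonneg.2 hq) (by linarith : (0:ℝ) ≤ p - 1)
    nlinarith [h]
  have hAle : A ^ (p - 1) ≤ 1/2 - γ := by
    have h1 : A ^ (p-1) = ((1:ℝ)/2) ^ (p-1) * ((1/2 - 1/(p-1)) ^ (1/(p-1))) ^ (p-1) := by
      rw [hA, Real.mul_rpow (by norm_num) (Real.rpow_nonneg hB.le _)]
    have h2 : (((1:ℝ)/2 - 1/(p-1)) ^ (1/(p-1))) ^ (p-1) = 1/2 - 1/(p-1) := by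
      rw [← Real.rpow_mul hB.le, one_div_mul_cancel (ne_of_gt hp1), Real.rpow_one]
    have h3 : ((1:ℝ)/2) ^ (p-1) ≤ 1 :=
      Real.rpow_le_one (by norm_num) (by norm_num) hp1.le
    rw [h1, h2, hγ]
    nlinarith [h3, hB, Real.rpow_nonneg (by norm_num : (0:ℝ) ≤ 1/2) (p-1)]
  have hVp : V₀ x t ^ p = (A ^ (p-1) * E ^ p) * (A * (t+1) ^ (-γ) / (t+1)) := by
    rw [hVxt, Real.mul_rpow (by positivity) hEpos.le, Real.mul_rpow hApos.le hupos.le,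
      ← Real.rpow_mul hu.le, show -γ * p = -γ + (-1) by rw [hγ]; field_simp; ring,
      Real.rpow_add hu, Real.rpow_neg_one,
      show A ^ p = A ^ (p-1) * A by
        have h := Real.rpow_add hApos (p-1) 1
        rw [Real.rpow_one] at h
        rw [← h, show p - 1 + 1 = p by ring]]
    ring
  have hfinal : V₀ x t ^ p ≤ A * (t+1) ^ (-γ) * E * ((1/2 - γ) / (t+1)) := by
    rw [hVp, show A * (t+1) ^ (-γ) * E * ((1/2 - γ) / (t+1))
        = ((1/2 - γ) * E) * (A * (t+1) ^ (-γ) / (t+1)) by ring]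
    apply mul_le_mul_of_nonneg_right _ (by positivity)
    exact mul_le_mul hAle hEle (Real.rpow_nonneg hEpos.le p) (by linarith)
  linarith [hcomb, hfinal]
end
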